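/- Let A ∈ ℝ^{m×n}, b ∈ ℝ^m, λ > 0, and let x̄ be a solution of the SR-LASSO with I := supp(x̄) such that the weak assumption holds at x̄, i.e.: (i) ker A_I = {0} and b ∉ range(A_I); (ii) there exists z ∈ ℝ^m with ⟨ȳ, z⟩ = 0 and A_Iᵀz = 0 such that ‖A_{I^C}ᵀ(ȳ + z)‖_∞ < λ, where ȳ := (b − Ax̄)/‖Ax̄ − b‖₂. Then x̄ is the unique solution of the SR-LASSO: every solution equals x̄. -/

import Mathlib

open Matrix Filter Topology
open scoped BigOperators Classical

noncomputable def l2 {k : ℕ} (x : Fin k → ℝ) : ℝ := Real.sqrt (∑ i, (x i) ^ 2)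

noncomputable def l1 {k : ℕ} (x : Fin k → ℝ) : ℝ := ∑ i, |x i|

noncomputable def linf {k : ℕ} (x : Fin k → ℝ) : ℝ := sSup (Set.range fun i => |x i|)

noncomputable def dotp {k : ℕ} (x y : Fin k → ℝ) : ℝ := ∑ i, x i * y i

noncomputable def pinv {m s : ℕ} (M : Matrix (Fin m) (Fin s) ℝ) :
    Matrix (Fin s) (Fin m) ℝ := (Mᵀ * M)⁻¹ * Mᵀ

/-- The SR-LASSO objective f_{A,b,λ}(x) := ‖Ax − b‖₂ + λ‖x‖₁. -/
noncomputable def srObj {m n : ℕ} (A : Matrix (Fin m) (Fin n) ℝ) (b : Fin m → ℝ)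
    (lam : ℝ) (x : Fin n → ℝ) : ℝ := l2 (A.mulVec x - b) + lam * l1 x

/-- x is a solution of the SR-LASSO with data (A, b, λ). -/
def IsSol {m n : ℕ} (A : Matrix (Fin m) (Fin n) ℝ) (b : Fin m → ℝ) (lam : ℝ)
    (x : Fin n → ℝ) : Prop := ∀ w : Fin n → ℝ, srObj A b lam x ≤ srObj A b lam w

/-- y is feasible for the SR-LASSO dual: ‖Aᵀy‖_∞ ≤ λ and ‖y‖₂ ≤ 1. -/
noncomputable def DualFeas {m n : ℕ} (A : Matrix (Fin m) (Fin n) ℝ) (lam : ℝ)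
    (y : Fin m → ℝ) : Prop := linf (Aᵀ.mulVec y) ≤ lam ∧ l2 y ≤ 1

/-- y is a solution of the SR-LASSO dual: it is feasible and maximizes ⟨b, ·⟩
over the feasible set. -/
noncomputable def IsDualSol {m n : ℕ} (A : Matrix (Fin m) (Fin n) ℝ) (b : Fin m → ℝ)
    (lam : ℝ) (y : Fin m → ℝ) : Prop :=
  DualFeas A lam y ∧ ∀ y' : Fin m → ℝ, DualFeas A lam y' → dotp b y' ≤ dotp b y


/-!
Since `A x̄ ≠ b`, the `ℓ₂` term of the objective is differentiable at `x̄`, and first-order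
optimality along the lines `x̄ + t d` shows that `ȳ` is a dual certificate:
`|(Aᵀȳ)ᵢ| ≤ λ` for all `i` and `⟨Aᵀȳ, x̄⟩ = λ‖x̄‖₁`. Hence `f(x̄) = ⟨ȳ, b⟩`, and for any
other solution `x` the estimate `⟨ȳ, b⟩ = ⟨ȳ, b - Ax⟩ + ⟨Aᵀȳ, x⟩ ≤ ‖Ax - b‖₂ + λ‖x‖₁`
is an equality: `b - Ax` is a nonnegative multiple of `ȳ` and `⟨Aᵀȳ, x⟩ = λ‖x‖₁`.
As `z ⊥ ȳ` and `Aᵀz` vanishes on `I`, also `⟨Aᵀ(ȳ + z), x⟩ = λ‖x‖₁`, and the strict bound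
off `I` forces `supp x ⊆ I`. Both residuals `b - Ax`, `b - Ax̄` are then multiples of `ȳ`
with `x, x̄` supported in `I`: `b ∉ range A_I` makes the multiples equal and
`ker A_I = {0}` gives `x = x̄`.
-/

open scoped InnerProductSpace

section InnerProductSpace

variable {E : Type*} [NormedAddCommGroup E] [InnerProductSpace ℝ E]

theorem hasDerivAt_norm_add_smul {v : E} (hv : v ≠ 0) (w : E) :
    HasDerivAt (fun t : ℝ => ‖v + t • w‖) (⟪v, w⟫_ℝ / ‖v‖) 0 := by
  have hline : HasDerivAt (fun t : ℝ => v + t • w) w 0 :=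
    ((hasDerivAt_id 0).smul_const w).const_add v |>.congr_deriv (one_smul ℝ w)
  have := hline.norm_sq.sqrt (by simpa using hv)
  simp only [Real.sqrt_sq (norm_nonneg _), zero_smul, add_zero] at this
  convert this using 1
  field_simp

theorem mul_norm_le_inner_of_le_norm_add_smul {v w : E} {c ε : ℝ} (hv : v ≠ 0) (hε : 0 < ε)
    (h : ∀ t ∈ Set.Ioo 0 ε, ‖v‖ + c * t ≤ ‖v + t • w‖) :
    c * ‖v‖ ≤ ⟪v, w⟫_ℝ := by
  have hslope := (hasDerivAt_norm_add_smul hv w).tendsto_slope_zero_right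
  have hc : ∀ᶠ t in 𝓝[>] (0 : ℝ), c ≤ t⁻¹ • (‖v + (0 + t) • w‖ - ‖v + (0 : ℝ) • w‖) := by
    filter_upwards [Ioo_mem_nhdsGT hε] with t ht
    rw [zero_add, zero_smul, add_zero, smul_eq_mul, le_inv_mul_iff₀ ht.1]
    linarith [h t ht]
  rw [← le_div_iff₀ (norm_pos_iff.mpr hv)]
  exact ge_of_tendsto hslope hc

end InnerProductSpace

section Vectors

variable {k : ℕ}

theorem l2_eq_norm (x : Fin k → ℝ) : l2 x = ‖WithLp.toLp 2 x‖ := by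
  simp [l2, EuclideanSpace.norm_eq, sq_abs]

theorem dotProduct_eq_inner (x y : Fin k → ℝ) :
    x ⬝ᵥ y = ⟪WithLp.toLp 2 x, WithLp.toLp 2 y⟫_ℝ := by
  simp [EuclideanSpace.inner_toLp_toLp, dotProduct_comm]

theorem l2_eq_zero {x : Fin k → ℝ} : l2 x = 0 ↔ x = 0 := by
  simp [l2_eq_norm]

theorem l2_nonneg (x : Fin k → ℝ) : 0 ≤ l2 x := Real.sqrt_nonneg _

theorem l2_smul (c : ℝ) (x : Fin k → ℝ) : l2 (c • x) = |c| * l2 x := by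
  simp [l2_eq_norm, WithLp.toLp_smul, norm_smul]

theorem l2_sub_comm (x y : Fin k → ℝ) : l2 (x - y) = l2 (y - x) := by
  simp only [l2_eq_norm, WithLp.toLp_sub, norm_sub_rev]

theorem dotProduct_self_eq_l2_sq (x : Fin k → ℝ) : x ⬝ᵥ x = l2 x ^ 2 := by
  rw [dotProduct_eq_inner, l2_eq_norm, real_inner_self_eq_norm_sq]

theorem dotProduct_le_l2_mul_l2 (x y : Fin k → ℝ) : x ⬝ᵥ y ≤ l2 x * l2 y := by
  simpa only [dotProduct_eq_inner, l2_eq_norm] using real_inner_le_norm _ _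

theorem eq_l2_smul_of_dotProduct_eq_l2 {y u : Fin k → ℝ} (hy : l2 y = 1)
    (h : y ⬝ᵥ u = l2 u) : u = l2 u • y := by
  rw [dotProduct_eq_inner, l2_eq_norm u] at h
  rw [l2_eq_norm] at hy ⊢
  have := inner_eq_norm_mul_iff_real.mp (by rw [h, hy, one_mul])
  rw [hy, one_smul] at this
  exact WithLp.toLp_injective 2 (by simpa [WithLp.toLp_smul] using this.symm)

theorem l1_add_le (x y : Fin k → ℝ) : l1 (x + y) ≤ l1 x + l1 y := by
  simp only [l1, Pi.add_apply, ← Finset.sum_add_distrib]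
  exact Finset.sum_le_sum fun i _ => abs_add_le _ _

theorem l1_smul (c : ℝ) (x : Fin k → ℝ) : l1 (c • x) = |c| * l1 x := by
  simp [l1, abs_mul, Finset.mul_sum]

theorem l1_single (i : Fin k) (a : ℝ) : l1 (Pi.single i a) = |a| := by
  simp [l1, Pi.single_apply, apply_ite]

theorem mul_le_mul_abs_of_abs_le {a b lam : ℝ} (h : |a| ≤ lam) : a * b ≤ lam * |b| :=
  (le_abs_self _).trans (by rw [abs_mul]; exact mul_le_mul_of_nonneg_right h (abs_nonneg _))

theorem dotProduct_le_mul_l1 {w : Fin k → ℝ} {lam : ℝ} (hw : ∀ i, |w i| ≤ lam)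
    (x : Fin k → ℝ) : w ⬝ᵥ x ≤ lam * l1 x := by
  rw [l1, Finset.mul_sum]
  exact Finset.sum_le_sum fun i _ => mul_le_mul_abs_of_abs_le (hw i)

theorem abs_le_of_forall_dotProduct_le_mul_l1 {w : Fin k → ℝ} {lam : ℝ}
    (hw : ∀ d, w ⬝ᵥ d ≤ lam * l1 d) (i : Fin k) : |w i| ≤ lam := by
  have h₁ := hw (Pi.single i 1)
  have h₂ := hw (Pi.single i (-1))
  simp only [dotProduct_single, l1_single] at h₁ h₂
  rw [abs_le]
  constructor <;> norm_num at h₁ h₂ <;> linarith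

theorem eq_zero_of_dotProduct_eq_mul_l1 {w x : Fin k → ℝ} {lam : ℝ} (hw : ∀ i, |w i| ≤ lam)
    (h : w ⬝ᵥ x = lam * l1 x) {i : Fin k} (hi : |w i| < lam) : x i = 0 := by
  have hgap : ∀ j ∈ Finset.univ, 0 ≤ lam * |x j| - w j * x j := fun j _ =>
    sub_nonneg.mpr (mul_le_mul_abs_of_abs_le (hw j))
  have hsum : ∑ j, (lam * |x j| - w j * x j) = 0 := by
    rw [Finset.sum_sub_distrib, ← Finset.mul_sum]
    exact sub_eq_zero.mpr (by simpa [l1, dotProduct] using h.symm)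
  have hi0 := (Finset.sum_eq_zero_iff_of_nonneg hgap).mp hsum i (Finset.mem_univ i)
  have hwx : w i * x i ≤ |w i| * |x i| := mul_le_mul_abs_of_abs_le le_rfl
  by_contra hx
  nlinarith [abs_pos.mpr hx]

end Vectors

section SRLasso

variable {m n : ℕ} {A : Matrix (Fin m) (Fin n) ℝ} {b : Fin m → ℝ} {lam : ℝ}

/-- The vector `ȳ` of the weak assumption, built from a candidate solution `x`. -/
noncomputable def srDual (A : Matrix (Fin m) (Fin n) ℝ) (b : Fin m → ℝ) (x : Fin n → ℝ) :
    Fin m → ℝ :=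
  (l2 (A *ᵥ x - b))⁻¹ • (b - A *ᵥ x)

theorem dotProduct_mulVec_eq_transpose (y : Fin m → ℝ) (x : Fin n → ℝ) :
    y ⬝ᵥ (A *ᵥ x) = (Aᵀ *ᵥ y) ⬝ᵥ x := by
  rw [dotProduct_mulVec, mulVec_transpose]

theorem l2_srDual {xbar : Fin n → ℝ} (hres : A *ᵥ xbar ≠ b) : l2 (srDual A b xbar) = 1 := by
  have hr : l2 (A *ᵥ xbar - b) ≠ 0 := l2_eq_zero.not.mpr (sub_ne_zero.mpr hres)
  rw [srDual, l2_smul, abs_inv, abs_of_nonneg (l2_nonneg _), l2_sub_comm b,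
    inv_mul_cancel₀ hr]

theorem srDual_dotProduct_residual (xbar : Fin n → ℝ) :
    srDual A b xbar ⬝ᵥ (b - A *ᵥ xbar) = l2 (A *ᵥ xbar - b) := by
  rw [srDual, smul_dotProduct, dotProduct_self_eq_l2_sq, l2_sub_comm b, smul_eq_mul]
  rcases eq_or_ne (l2 (A *ᵥ xbar - b)) 0 with h | h
  · simp [h]
  · field_simp

theorem IsSol.srDual_dotProduct_mulVec_le {xbar d : Fin n → ℝ} {c ε : ℝ}
    (hsol : IsSol A b lam xbar) (hlam : 0 ≤ lam) (hres : A *ᵥ xbar ≠ b) (hε : 0 < ε)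
    (hd : ∀ t ∈ Set.Ioo 0 ε, l1 (xbar + t • d) ≤ l1 xbar + c * t) :
    srDual A b xbar ⬝ᵥ (A *ᵥ d) ≤ lam * c := by
  set v := A *ᵥ xbar - b
  have hv : v ≠ 0 := sub_ne_zero.mpr hres
  have hr : 0 < l2 v := (l2_nonneg v).lt_of_ne' (l2_eq_zero.not.mpr hv)
  have hdir : -(lam * c) * l2 v ≤ v ⬝ᵥ (A *ᵥ d) := by
    rw [l2_eq_norm, dotProduct_eq_inner]
    refine mul_norm_le_inner_of_le_norm_add_smul (by simpa using hv) hε fun t ht => ?_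
    have hopt := hsol (xbar + t • d)
    have hshift : A *ᵥ (xbar + t • d) - b = v + t • A *ᵥ d := by
      rw [mulVec_add, mulVec_smul, add_sub_right_comm]
    rw [srObj, srObj, hshift, l2_eq_norm, l2_eq_norm] at hopt
    rw [← WithLp.toLp_smul, ← WithLp.toLp_add]
    nlinarith [mul_le_mul_of_nonneg_left (hd t ht) hlam]
  have hneg : srDual A b xbar = -(l2 v)⁻¹ • v := by
    rw [srDual, neg_smul, ← smul_neg, neg_sub]
  rw [hneg, smul_dotProduct, smul_eq_mul, neg_mul, neg_le, le_inv_mul_iff₀ hr]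
  linarith

theorem IsSol.abs_transpose_mulVec_srDual_le {xbar : Fin n → ℝ} (hsol : IsSol A b lam xbar)
    (hlam : 0 ≤ lam) (hres : A *ᵥ xbar ≠ b) (i : Fin n) :
    |(Aᵀ *ᵥ srDual A b xbar) i| ≤ lam := by
  refine abs_le_of_forall_dotProduct_le_mul_l1 (fun d => ?_) i
  rw [← dotProduct_mulVec_eq_transpose]
  refine hsol.srDual_dotProduct_mulVec_le hlam hres one_pos fun t ht => ?_
  calc l1 (xbar + t • d) ≤ l1 xbar + l1 (t • d) := l1_add_le _ _
    _ = l1 xbar + l1 d * t := by rw [l1_smul, abs_of_pos ht.1, mul_comm]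

theorem IsSol.transpose_mulVec_srDual_dotProduct {xbar : Fin n → ℝ} (hsol : IsSol A b lam xbar)
    (hlam : 0 ≤ lam) (hres : A *ᵥ xbar ≠ b) :
    (Aᵀ *ᵥ srDual A b xbar) ⬝ᵥ xbar = lam * l1 xbar := by
  refine le_antisymm
    (dotProduct_le_mul_l1 (hsol.abs_transpose_mulVec_srDual_le hlam hres) xbar) ?_
  have hshrink : ∀ t ∈ Set.Ioo (0 : ℝ) 1, l1 (xbar + t • -xbar) ≤ l1 xbar + -l1 xbar * t :=
    fun t ht => by
      rw [show xbar + t • -xbar = (1 - t) • xbar by module, l1_smul,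
        abs_of_pos (sub_pos.mpr ht.2)]
      linarith
  have hshrink_le := hsol.srDual_dotProduct_mulVec_le hlam hres one_pos hshrink
  rw [mulVec_neg, dotProduct_neg, dotProduct_mulVec_eq_transpose] at hshrink_le
  linarith

theorem dotProduct_eq_residual_add (y b : Fin m → ℝ) (x : Fin n → ℝ) :
    y ⬝ᵥ b = y ⬝ᵥ (b - A *ᵥ x) + (Aᵀ *ᵥ y) ⬝ᵥ x := by
  rw [dotProduct_sub, dotProduct_mulVec_eq_transpose, sub_add_cancel]

theorem IsSol.srObj_eq_srDual_dotProduct {xbar : Fin n → ℝ} (hsol : IsSol A b lam xbar)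
    (hlam : 0 ≤ lam) (hres : A *ᵥ xbar ≠ b) :
    srObj A b lam xbar = srDual A b xbar ⬝ᵥ b := by
  rw [dotProduct_eq_residual_add _ b xbar, srDual_dotProduct_residual,
    hsol.transpose_mulVec_srDual_dotProduct hlam hres, srObj]

theorem eq_of_srObj_eq_dotProduct {y : Fin m → ℝ} {x : Fin n → ℝ} (hy : l2 y = 1)
    (hAy : ∀ i, |(Aᵀ *ᵥ y) i| ≤ lam) (h : srObj A b lam x = y ⬝ᵥ b) :
    b - A *ᵥ x = l2 (A *ᵥ x - b) • y ∧ (Aᵀ *ᵥ y) ⬝ᵥ x = lam * l1 x := by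
  have hcs : y ⬝ᵥ (b - A *ᵥ x) ≤ l2 (A *ᵥ x - b) := by
    simpa [hy, l2_sub_comm b] using dotProduct_le_l2_mul_l2 y (b - A *ᵥ x)
  have hreg := dotProduct_le_mul_l1 hAy x
  rw [srObj, dotProduct_eq_residual_add y b x] at h
  have hcs_eq : y ⬝ᵥ (b - A *ᵥ x) = l2 (b - A *ᵥ x) := by
    rw [← l2_sub_comm]; linarith
  exact ⟨l2_sub_comm b _ ▸ eq_l2_smul_of_dotProduct_eq_l2 hy hcs_eq, by linarith⟩

theorem eq_of_sub_mulVec_eq_smul {Z : Fin n → Prop} {u u' : Fin n → ℝ} {y : Fin m → ℝ}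
    {c c' : ℝ} (hker : ∀ v : Fin n → ℝ, (∀ i, Z i → v i = 0) → A *ᵥ v = 0 → v = 0)
    (hrge : ¬ ∃ v : Fin n → ℝ, (∀ i, Z i → v i = 0) ∧ A *ᵥ v = b)
    (hu : ∀ i, Z i → u i = 0) (hu' : ∀ i, Z i → u' i = 0)
    (hc : b - A *ᵥ u = c • y) (hc' : b - A *ᵥ u' = c' • y) : u = u' := by
  have hcomb : (c' - c) • b = A *ᵥ (c' • u - c • u') := by
    rw [mulVec_sub, mulVec_smul, mulVec_smul]
    linear_combination (norm := module) c' • hc - c • hc'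
  have hcc : c' = c := by
    by_contra hne
    refine hrge ⟨(c' - c)⁻¹ • (c' • u - c • u'), fun i hi => by simp [hu i hi, hu' i hi], ?_⟩
    rw [mulVec_smul, ← hcomb, smul_smul, inv_mul_cancel₀ (sub_ne_zero.mpr hne), one_smul]
  subst hcc
  have hdiff : A *ᵥ (u - u') = 0 := by
    rw [mulVec_sub, sub_eq_zero]
    linear_combination (norm := module) hc' - hc
  exact sub_eq_zero.mp (hker _ (fun i hi => by simp [hu i hi, hu' i hi]) hdiff)

theorem apply_eq_zero_of_strict_certificate {xbar x : Fin n → ℝ} {y z : Fin m → ℝ} {c c' : ℝ}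
    (hAy : ∀ i, |(Aᵀ *ᵥ y) i| ≤ lam) (hx : (Aᵀ *ᵥ y) ⬝ᵥ x = lam * l1 x)
    (hzy : y ⬝ᵥ z = 0) (hzI : ∀ i, xbar i ≠ 0 → (Aᵀ *ᵥ z) i = 0)
    (hzIc : ∀ i, xbar i = 0 → |(Aᵀ *ᵥ (y + z)) i| < lam)
    (hc : b - A *ᵥ x = c • y) (hc' : b - A *ᵥ xbar = c' • y) {i : Fin n} (hi : xbar i = 0) :
    x i = 0 := by
  have hzxbar : (Aᵀ *ᵥ z) ⬝ᵥ xbar = 0 :=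
    Finset.sum_eq_zero fun j _ => by by_cases hj : xbar j = 0 <;> simp [hj, hzI]
  have hAx : A *ᵥ x = A *ᵥ xbar + (c' - c) • y := by
    linear_combination (norm := module) hc' - hc
  have hzx : (Aᵀ *ᵥ z) ⬝ᵥ x = 0 := by
    rw [← dotProduct_mulVec_eq_transpose, hAx, dotProduct_add, dotProduct_mulVec_eq_transpose,
      hzxbar, dotProduct_smul, dotProduct_comm, hzy, smul_zero, add_zero]
  have hw : ∀ j, |(Aᵀ *ᵥ (y + z)) j| ≤ lam := fun j => by
    by_cases hj : xbar j = 0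
    · exact (hzIc j hj).le
    · rw [mulVec_add, Pi.add_apply, hzI j hj, add_zero]
      exact hAy j
  refine eq_zero_of_dotProduct_eq_mul_l1 hw ?_ (hzIc i hi)
  rw [mulVec_add, add_dotProduct, hx, hzx, add_zero]

end SRLasso

/-- uniqueness under the weak assumption: let x̄ solve the
SR-LASSO with I := supp(x̄) and suppose (i) ker A_I = {0} and b ∉ range A_I;
(ii) there is z ⊥ ȳ with A_Iᵀz = 0 and ‖A_{I^C}ᵀ(ȳ + z)‖_∞ < λ, where
ȳ := (b − Ax̄)/‖Ax̄ − b‖₂. Then x̄ is the unique solution. -/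
theorem stmt_8 {m n : ℕ} (A : Matrix (Fin m) (Fin n) ℝ) (b : Fin m → ℝ)
    (lam : ℝ) (hlam : 0 < lam) (xbar : Fin n → ℝ)
    (hsol : IsSol A b lam xbar)
    (ybar : Fin m → ℝ)
    (hybar : ybar = (l2 (A.mulVec xbar - b))⁻¹ • (b - A.mulVec xbar))
    -- (i) ker A_I = {0}:
    (hker : ∀ u : Fin n → ℝ, (∀ i, xbar i = 0 → u i = 0) → A.mulVec u = 0 → u = 0)
    -- (i) b ∉ rge A_I:
    (hrge : ¬ ∃ u : Fin n → ℝ, (∀ i, xbar i = 0 → u i = 0) ∧ A.mulVec u = b)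
    -- (ii):
    (hz : ∃ z : Fin m → ℝ, dotp ybar z = 0 ∧
        (∀ i, xbar i ≠ 0 → dotp (fun r => A r i) z = 0) ∧
        (∀ i, xbar i = 0 → |dotp (fun r => A r i) (ybar + z)| < lam)) :
    ∀ x : Fin n → ℝ, IsSol A b lam x → x = xbar := by
  obtain ⟨z, hzy, hzI, hzIc⟩ := hz
  intro x hx
  have hres : A *ᵥ xbar ≠ b := fun h => hrge ⟨xbar, fun _ => id, h⟩
  change ybar = srDual A b xbar at hybar
  subst hybar
  have hAy := hsol.abs_transpose_mulVec_srDual_le hlam.le hres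
  have hval : srObj A b lam x = srDual A b xbar ⬝ᵥ b := by
    rw [← hsol.srObj_eq_srDual_dotProduct hlam.le hres]
    exact le_antisymm (hx xbar) (hsol x)
  obtain ⟨hcol, hxval⟩ := eq_of_srObj_eq_dotProduct (l2_srDual hres) hAy hval
  have hcol' : b - A *ᵥ xbar = l2 (A *ᵥ xbar - b) • srDual A b xbar := by
    rw [srDual, smul_smul, mul_inv_cancel₀ (l2_eq_zero.not.mpr (sub_ne_zero.mpr hres)), one_smul]
  have hsupp : ∀ i, xbar i = 0 → x i = 0 := fun i hi =>
    apply_eq_zero_of_strict_certificate hAy hxval hzy hzI hzIc hcol hcol' hi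
  exact eq_of_sub_mulVec_eq_smul hker hrge hsupp (fun _ => id) hcol hcol'
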